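/- Define N_ℓ(a,b,c) ∈ {0,1} as: 1 iff a,b,c ≤ ℓ, a+b+c even, |a-b| ≤ c ≤ a+b, a+b+c ≤ 2ℓ. Let c(x) = x²/2 + x and define Deg_ℓ(λ₁,λ₂,λ₃,λ₄) = (1/(2(ℓ+2)))·[ (∑_{μ=0}^{ℓ} N_ℓ(λ₁,λ₂,μ)N_ℓ(μ,λ₃,λ₄))·∑_{i=1}^4 c(λ_i) − ∑_{μ=0}^{ℓ} c(μ)·( N_ℓ(λ₁,λ₂,μ)N_ℓ(λ₃,λ₄,μ) + N_ℓ(λ₁,λ₃,μ)N_ℓ(λ₂,λ₄,μ) + N_ℓ(λ₁,λ₄,μ)N_ℓ(λ₂,λ₃,μ) ) ] ∈ ℚ. Suppose λ₁ ≤ λ₂ ≤ λ₃ ≤ λ₄ are nonnegative integers with even sum, ℓ = (λ₁+λ₂+λ₃+λ₄)/2 − 1, and λ₄ ≤ ℓ. Then Deg_ℓ(λ₁,λ₂,λ₃,λ₄) = ℓ + 1 − λ₄ if λ₁+λ₄ ≥ λ₂+λ₃, and Deg_ℓ(λ₁,λ₂,λ₃,λ₄) = λ₁ if λ₁+λ₄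 ≤ λ₂+λ₃. -/

import Mathlib

open Finset

/-- The rank of the 3-point level-`ℓ` conformal block for `sl₂`. -/
def slTwoRank (ℓ a b c : ℕ) : ℕ :=
  if a ≤ ℓ ∧ b ≤ ℓ ∧ c ≤ ℓ ∧ Even (a + b + c) ∧
      ((a : ℤ) - (b : ℤ)).natAbs ≤ c ∧ c ≤ a + b ∧ a + b + c ≤ 2 * ℓ
  then 1 else 0

/-- The normalized Casimir eigenvalue `c(x) = x²/2 + x` for `sl₂`. -/
def casimir (x : ℕ) : ℚ := (x : ℚ) ^ 2 / 2 + (x : ℚ)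

/-- The degree on `M̄₀,₄` of the determinant of the level-`ℓ` 4-point
conformal block bundle for `sl₂` with weights `(l₁, l₂, l₃, l₄)`. -/
def degDet (ℓ l₁ l₂ l₃ l₄ : ℕ) : ℚ :=
  (1 / (2 * ((ℓ : ℚ) + 2))) *
    (((∑ μ ∈ Finset.range (ℓ + 1),
        slTwoRank ℓ l₁ l₂ μ * slTwoRank ℓ μ l₃ l₄ : ℕ) : ℚ) *
        (casimir l₁ + casimir l₂ + casimir l₃ + casimir l₄) -
      ∑ μ ∈ Finset.range (ℓ + 1), casimir μ *
        ((slTwoRank ℓ l₁ l₂ μ * slTwoRank ℓ l₃ l₄ μ +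
          slTwoRank ℓ l₁ l₃ μ * slTwoRank ℓ l₂ l₄ μ +
          slTwoRank ℓ l₁ l₄ μ * slTwoRank ℓ l₂ l₃ μ : ℕ) : ℚ))

/-!
At the critical level `a + b + c + d = 2ℓ + 2` the truncation `a + b + μ ≤ 2ℓ` becomes
`μ < c + d`, so `N(a,b,μ) N(c,d,μ) ≠ 0` exactly for `μ` in the progression
`A, A + 2, …, A + 2(n - 1)` with `A = max(|a - b|, |c - d|)` and `A + 2n = min(a + b, c + d)`;
the length `n` is the same for all three pairings of the weights. Both sums in `degDet` are then
sums of the quadratic `casimir` over arithmetic progressions, which have a closed form, and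
in each of the two cases the resulting rational expression simplifies to the claimed value.
-/

lemma slTwoRank_rotate (ℓ a b c : ℕ) : slTwoRank ℓ a b c = slTwoRank ℓ b c a := by
  simp only [slTwoRank, Nat.even_iff]
  exact if_congr (by omega) rfl rfl

section Critical

variable {ℓ a b c d A n : ℕ} (ha : a ≤ ℓ) (hb : b ≤ ℓ) (hc : c ≤ ℓ) (hd : d ≤ ℓ)
  (hcrit : a + b + c + d = 2 * ℓ + 2)
  (hA : A = max ((a : ℤ) - b).natAbs ((c : ℤ) - d).natAbs)
  (hn : A + 2 * n = min (a + b) (c + d))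
include ha hb hc hd hcrit hA hn

lemma slTwoRank_mul_slTwoRank_of_critical (μ : ℕ) :
    slTwoRank ℓ a b μ * slTwoRank ℓ c d μ =
      if A ≤ μ ∧ μ < A + 2 * n ∧ (μ - A) % 2 = 0 then 1 else 0 := by
  simp only [slTwoRank, Nat.even_iff]
  split_ifs <;> omega

lemma sum_mul_slTwoRank_mul_slTwoRank_of_critical {R : Type*} [CommSemiring R] (f : ℕ → R) :
    ∑ μ ∈ range (ℓ + 1), f μ * ((slTwoRank ℓ a b μ * slTwoRank ℓ c d μ : ℕ) : R) =
      ∑ k ∈ range n, f (A + 2 * k) := by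
  have hprog : (range (ℓ + 1)).filter (fun μ => A ≤ μ ∧ μ < A + 2 * n ∧ (μ - A) % 2 = 0) =
      (range n).image (fun k => A + 2 * k) := by
    ext μ
    simp only [mem_filter, mem_range, mem_image]
    constructor
    · rintro ⟨-, hAμ, hμ, hpar⟩
      exact ⟨(μ - A) / 2, by omega, by omega⟩
    · rintro ⟨k, hk, rfl⟩
      omega
  simp only [slTwoRank_mul_slTwoRank_of_critical ha hb hc hd hcrit hA hn, Nat.cast_ite,
    Nat.cast_one, Nat.cast_zero, mul_ite, mul_one, mul_zero]
  rw [← sum_filter, hprog, sum_image (fun _ _ _ _ h => by omega)]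

end Critical

lemma sum_range_casimir_add_two_mul (A n : ℕ) :
    ∑ k ∈ range n, casimir (A + 2 * k) =
      n * casimir A + (A + 1) * n * (n - 1) + n * (n - 1) * (2 * n - 1) / 3 := by
  induction n with
  | zero => simp
  | succ m ih =>
    rw [sum_range_succ, ih]
    simp only [casimir]
    push_cast
    ring

lemma degDet_eq_of_critical {ℓ l₁ l₂ l₃ l₄ A₁₂ A₁₃ A₁₄ n : ℕ}
    (h₁ : l₁ ≤ ℓ) (h₂ : l₂ ≤ ℓ) (h₃ : l₃ ≤ ℓ) (h₄ : l₄ ≤ ℓ)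
    (hcrit : l₁ + l₂ + l₃ + l₄ = 2 * ℓ + 2)
    (hA₁₂ : A₁₂ = max ((l₁ : ℤ) - l₂).natAbs ((l₃ : ℤ) - l₄).natAbs)
    (hn₁₂ : A₁₂ + 2 * n = min (l₁ + l₂) (l₃ + l₄))
    (hA₁₃ : A₁₃ = max ((l₁ : ℤ) - l₃).natAbs ((l₂ : ℤ) - l₄).natAbs)
    (hn₁₃ : A₁₃ + 2 * n = min (l₁ + l₃) (l₂ + l₄))
    (hA₁₄ : A₁₄ = max ((l₁ : ℤ) - l₄).natAbs ((l₂ : ℤ) - l₃).natAbs)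
    (hn₁₄ : A₁₄ + 2 * n = min (l₁ + l₄) (l₂ + l₃)) :
    degDet ℓ l₁ l₂ l₃ l₄ = 1 / (2 * ((ℓ : ℚ) + 2)) *
      (n * (casimir l₁ + casimir l₂ + casimir l₃ + casimir l₄) -
        (∑ k ∈ range n, casimir (A₁₂ + 2 * k) + ∑ k ∈ range n, casimir (A₁₃ + 2 * k) +
          ∑ k ∈ range n, casimir (A₁₄ + 2 * k))) := by
  have hrank : ∑ μ ∈ range (ℓ + 1), slTwoRank ℓ l₁ l₂ μ * slTwoRank ℓ μ l₃ l₄ = n := by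
    simp_rw [slTwoRank_rotate ℓ _ l₃ l₄]
    simpa using sum_mul_slTwoRank_mul_slTwoRank_of_critical h₁ h₂ h₃ h₄ hcrit hA₁₂ hn₁₂
      (fun _ => (1 : ℕ))
  rw [degDet, hrank]
  simp only [Nat.cast_add, mul_add, sum_add_distrib]
  rw [sum_mul_slTwoRank_mul_slTwoRank_of_critical h₁ h₂ h₃ h₄ hcrit hA₁₂ hn₁₂,
    sum_mul_slTwoRank_mul_slTwoRank_of_critical h₁ h₃ h₂ h₄ (by omega) hA₁₃ hn₁₃,
    sum_mul_slTwoRank_mul_slTwoRank_of_critical h₁ h₄ h₂ h₃ (by omega) hA₁₄ hn₁₄]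

lemma level_eq_half_sum_sub_one {ℓ l₁ l₂ l₃ l₄ : ℕ}
    (hcrit : 2 * (ℓ + 1) = l₁ + l₂ + l₃ + l₄) : (ℓ : ℚ) = (l₁ + l₂ + l₃ + l₄) / 2 - 1 := by
  have : ((2 * (ℓ + 1) : ℕ) : ℚ) = ((l₁ + l₂ + l₃ + l₄ : ℕ) : ℚ) := by rw [hcrit]
  push_cast at this
  linarith

section Ordered

variable {ℓ l₁ l₂ l₃ l₄ : ℕ} (h12 : l₁ ≤ l₂) (h23 : l₂ ≤ l₃) (h34 : l₃ ≤ l₄)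
  (hcrit : 2 * (ℓ + 1) = l₁ + l₂ + l₃ + l₄) (h4 : l₄ ≤ ℓ)
include h12 h23 h34 hcrit h4

lemma degDet_eq_succ_sub_of_inner_le_outer (h : l₂ + l₃ ≤ l₁ + l₄) :
    degDet ℓ l₁ l₂ l₃ l₄ = ℓ + 1 - l₄ := by
  rw [degDet_eq_of_critical (A₁₂ := l₄ - l₃) (A₁₃ := l₄ - l₂) (A₁₄ := l₄ - l₁) (n := ℓ + 1 - l₄)
    (by omega) (by omega) (by omega) h4 (by omega)
    (by omega) (by omega) (by omega) (by omega) (by omega) (by omega)]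
  simp only [sum_range_casimir_add_two_mul]
  unfold casimir
  push_cast [Nat.cast_sub h34, Nat.cast_sub (h23.trans h34),
    Nat.cast_sub (h12.trans (h23.trans h34)), Nat.cast_sub (by omega : l₄ ≤ ℓ + 1)]
  rw [one_div, inv_mul_eq_iff_eq_mul₀ (by positivity), level_eq_half_sum_sub_one hcrit]
  ring

lemma degDet_eq_of_outer_le_inner (h : l₁ + l₄ ≤ l₂ + l₃) :
    degDet ℓ l₁ l₂ l₃ l₄ = l₁ := by
  rw [degDet_eq_of_critical (A₁₂ := l₂ - l₁) (A₁₃ := l₃ - l₁) (A₁₄ := l₄ - l₁) (n := l₁)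
    (by omega) (by omega) (by omega) h4 (by omega)
    (by omega) (by omega) (by omega) (by omega) (by omega) (by omega)]
  simp only [sum_range_casimir_add_two_mul]
  unfold casimir
  push_cast [Nat.cast_sub h12, Nat.cast_sub (h12.trans h23),
    Nat.cast_sub (h12.trans (h23.trans h34))]
  rw [one_div, inv_mul_eq_iff_eq_mul₀ (by positivity), level_eq_half_sum_sub_one hcrit]
  ring

end Ordered

theorem stmt_8 (l₁ l₂ l₃ l₄ ℓ : ℕ)
    (h12 : l₁ ≤ l₂) (h23 : l₂ ≤ l₃) (h34 : l₃ ≤ l₄)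
    (hcrit : 2 * (ℓ + 1) = l₁ + l₂ + l₃ + l₄) (h4 : l₄ ≤ ℓ) :
    (l₂ + l₃ ≤ l₁ + l₄ → degDet ℓ l₁ l₂ l₃ l₄ = (ℓ : ℚ) + 1 - (l₄ : ℚ)) ∧
    (l₁ + l₄ ≤ l₂ + l₃ → degDet ℓ l₁ l₂ l₃ l₄ = (l₁ : ℚ)) :=
  ⟨degDet_eq_succ_sub_of_inner_le_outer h12 h23 h34 hcrit h4,
    degDet_eq_of_outer_le_inner h12 h23 h34 hcrit h4⟩
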